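/- Let κ > 0 and λ > 0, and set Det(λ) = 2κ²λ^{−1/2}(1−cos√λ)(1+κ²/λ) − sin(√λ)(κ²/√λ+√λ)². Then Det(λ) = 0 if and only if either λ = (2kπ)² for some positive integer k, or cos(√λ/2) ≠ 0 and 2·tan(√λ/2) = √λ·(λ+κ²)/κ². -/
import Mathlib


/-- The determinant `Det(λ)` of the 2×2 linear system obtained by imposing the
non-local boundary conditions on `a·sin(√λ x) + b·cos(√λ x)`. -/
noncomputable def Det (κ l : ℝ) : ℝ :=
  2 * κ ^ 2 / Real.sqrt l * (1 - Real.cos (Real.sqrt l)) * (1 + κ ^ 2 / l)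
    - Real.sin (Real.sqrt l) * (κ ^ 2 / Real.sqrt l + Real.sqrt l) ^ 2

/-- **Roots of the determinant.** For `κ, λ > 0`, `Det(λ) = 0` iff either
`λ = (2kπ)²` for some positive integer `k`, or `cos(√λ/2) ≠ 0` and
`2 tan(√λ/2) = √λ (λ+κ²)/κ²`. -/
theorem det_roots (κ l : ℝ) (hκ : 0 < κ) (hl : 0 < l) :
    Det κ l = 0 ↔
      (∃ k : ℕ, 0 < k ∧ l = (2 * (k:ℝ) * Real.pi) ^ 2) ∨
      (Real.cos (Real.sqrt l / 2) ≠ 0 ∧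
        2 * Real.tan (Real.sqrt l / 2) = Real.sqrt l * (l + κ ^ 2) / κ ^ 2) := by
  set s := Real.sqrt l with hs_def
  have hs : 0 < s := Real.sqrt_pos.mpr hl
  have hls : l = s ^ 2 := (Real.sq_sqrt hl.le).symm
  have hsin2 : (1 : ℝ) - Real.cos s = 2 * Real.sin (s / 2) ^ 2 := by
    have h := Real.cos_two_mul (s / 2)
    rw [show 2 * (s / 2) = s by ring] at h
    have h2 := Real.sin_sq_add_cos_sq (s / 2)
    linarith
  have hsin : Real.sin s = 2 * Real.sin (s / 2) * Real.cos (s / 2) := by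
    have h := Real.sin_two_mul (s / 2)
    rw [show 2 * (s / 2) = s by ring] at h
    linarith
  have hDet : Det κ l = (2 * (s ^ 2 + κ ^ 2) / s ^ 3) *
      (Real.sin (s / 2) *
        (2 * κ ^ 2 * Real.sin (s / 2) - s * (κ ^ 2 + s ^ 2) * Real.cos (s / 2))) := by
    rw [Det, ← hs_def, hls, hsin2, hsin]
    field_simp
    ring
  have hC : (0 : ℝ) < 2 * (s ^ 2 + κ ^ 2) / s ^ 3 := by positivity
  have hfac : Det κ l = 0 ↔ Real.sin (s / 2) = 0 ∨
      2 * κ ^ 2 * Real.sin (s / 2) - s * (κ ^ 2 + s ^ 2) * Real.cos (s / 2) = 0 := by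
    rw [hDet, mul_eq_zero, mul_eq_zero]
    constructor
    · rintro (h | h)
      · exact absurd h hC.ne'
      · exact h
    · exact fun h => Or.inr h
  rw [hfac]
  constructor
  · rintro (h0 | h1)
    · left
      rcases Real.sin_eq_zero_iff.mp h0 with ⟨n, hn⟩
      have hn0 : 0 < n := by
        by_contra hc
        push_neg at hc
        have : (n : ℝ) * Real.pi ≤ 0 :=
          mul_nonpos_of_nonpos_of_nonneg (by exact_mod_cast hc) Real.pi_pos.le
        linarith
      refine ⟨n.toNat, by omega, ?_⟩
      have hcast : ((n.toNat : ℕ) : ℝ) = (n : ℝ) := by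
        exact_mod_cast congrArg Int.cast (Int.toNat_of_nonneg hn0.le)
      rw [hls, hcast]
      have : s = 2 * (n : ℝ) * Real.pi := by linarith
      rw [this]
    · by_cases hc : Real.cos (s / 2) = 0
      · exfalso
        rw [hc] at h1
        have hκ2 : (0:ℝ) < κ ^ 2 := by positivity
        have hsin0 : Real.sin (s / 2) = 0 := by nlinarith [h1]
        have hpy := Real.sin_sq_add_cos_sq (s / 2)
        rw [hc, hsin0] at hpy
        norm_num at hpy
      · right
        refine ⟨hc, ?_⟩
        rw [Real.tan_eq_sin_div_cos, hls]
        field_simp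
        linear_combination h1
  · rintro (⟨k, hk, hkl⟩ | ⟨hc, ht⟩)
    · left
      have hk' : s = 2 * (k : ℝ) * Real.pi := by
        rw [hs_def, hkl, Real.sqrt_sq (by positivity)]
      rw [hk', show (2 * (k : ℝ) * Real.pi) / 2 = (k : ℝ) * Real.pi by ring]
      exact Real.sin_nat_mul_pi k
    · right
      rw [Real.tan_eq_sin_div_cos, hls] at ht
      field_simp at ht
      linear_combination ht
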